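/- arXiv:2310.05013 — 12 statements merged into one kernel-verified Lean document; each statement's English description precedes it below -/
import Mathlib

section
/- Let N : ℕ → ℕ → ℕ satisfy the recurrence N(ℓ,1) = 1 for all ℓ ≥ 1; N(1,m) = m − 1 for all m ≥ 2; N(ℓ,m) = N(m,m) for all ℓ > m ≥ 2; and N(ℓ,m) = ∑_{j=1}^{m−1} N(ℓ−1,j) for all 2 ≤ ℓ ≤ m. Then for all ℓ ≥ 1 and m ≥ 1: N(ℓ,m) = 1 if m = 1; N(ℓ,m) = 2^(m−2) if m ≥ 2 and ℓ ≥ m − 1; and N(ℓ,m) = ∑_{j=0}^{ℓ} C(m−2, j) if m ≥ 2 and 1 ≤ ℓ ≤ m − 2, where C(·,·) denotes the binomial coefficient. -/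
/-!
Write `S ℓ n = ∑_{i ≤ ℓ} C(n, i)` for the number of subsets of size at most `ℓ` of an `n`-set.
Pascal's rule gives `S (ℓ + 1) (n + 1) = S (ℓ + 1) n + S ℓ n`, hence
`S (ℓ + 1) n = 1 + ∑_{k < n} S ℓ k`. This is exactly the recurrence for `N` after the shift
`N ℓ (n + 2) = S ℓ n`, the term `1` being `N (ℓ - 1) 1`; so strong induction on `ℓ` identifies
`N` with `S`, and `S ℓ n = 2 ^ n` as soon as `n ≤ ℓ`.
-/

open Finset

def binomPartialSum (ℓ n : ℕ) : ℕ := ∑ i ∈ range (ℓ + 1), n.choose i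

theorem binomPartialSum_of_le {ℓ n : ℕ} (h : n ≤ ℓ) : binomPartialSum ℓ n = 2 ^ n := by
  obtain ⟨k, rfl⟩ := Nat.exists_eq_add_of_le h
  rw [binomPartialSum, add_right_comm, sum_range_add, Nat.sum_range_choose, add_eq_left]
  exact sum_eq_zero fun i _ => Nat.choose_eq_zero_of_lt (by omega)

theorem binomPartialSum_zero_right (ℓ : ℕ) : binomPartialSum ℓ 0 = 1 :=
  binomPartialSum_of_le (Nat.zero_le ℓ)

theorem binomPartialSum_one_left (n : ℕ) : binomPartialSum 1 n = n + 1 := by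
  simp [binomPartialSum, sum_range_succ, add_comm]

theorem binomPartialSum_succ_succ (ℓ n : ℕ) :
    binomPartialSum (ℓ + 1) (n + 1) = binomPartialSum (ℓ + 1) n + binomPartialSum ℓ n := by
  simp only [binomPartialSum]
  rw [sum_range_succ', sum_range_succ' (fun i => n.choose i)]
  simp only [Nat.choose_succ_succ, sum_add_distrib, Nat.choose_zero_right]
  ring

theorem binomPartialSum_succ_left (ℓ n : ℕ) :
    binomPartialSum (ℓ + 1) n = 1 + ∑ k ∈ range n, binomPartialSum ℓ k := by
  induction n with
  | zero => simp [binomPartialSum_zero_right]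
  | succ n ih => rw [binomPartialSum_succ_succ, ih, sum_range_succ, add_assoc]

theorem sum_Icc_one_eq_add_sum_range {M : Type*} [AddCommMonoid M] (f : ℕ → M) (n : ℕ) :
    ∑ j ∈ Icc 1 (n + 1), f j = f 1 + ∑ k ∈ range n, f (k + 2) := by
  rw [← Ico_add_one_right_eq_Icc, sum_Ico_eq_sum_range, Nat.add_sub_cancel, sum_range_succ',
    add_comm]
  simp only [add_comm 1, add_assoc]

theorem eq_binomPartialSum_of_recurrence (N : ℕ → ℕ → ℕ)
    (h1 : ∀ l, 1 ≤ l → N l 1 = 1)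
    (h2 : ∀ m, 2 ≤ m → N 1 m = m - 1)
    (h3 : ∀ l m, 2 ≤ m → m < l → N l m = N m m)
    (h4 : ∀ l m, 2 ≤ l → l ≤ m → N l m = ∑ j ∈ Icc 1 (m - 1), N (l - 1) j)
    (ℓ n : ℕ) : N (ℓ + 1) (n + 2) = binomPartialSum (ℓ + 1) n := by
  induction ℓ using Nat.strong_induction_on generalizing n with
  | _ ℓ ih =>
    rcases ℓ with _ | ℓ
    · rw [h2 (n + 2) (by omega), binomPartialSum_one_left, show n + 2 - 1 = n + 1 by omega]
    · rcases lt_or_ge n ℓ with hnℓ | hℓn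
      · rw [h3 _ _ (by omega) (by omega), ih (n + 1) (by omega),
          binomPartialSum_of_le (by omega), binomPartialSum_of_le (by omega)]
      · rw [h4 _ _ (by omega) (by omega), Nat.add_sub_cancel, show n + 2 - 1 = n + 1 by omega,
          sum_Icc_one_eq_add_sum_range, h1 _ (by omega), binomPartialSum_succ_left]
        exact congrArg _ (sum_congr rfl fun k _ => ih ℓ (by omega) k)

theorem capacity_formula
    (N : ℕ → ℕ → ℕ)
    (h1 : ∀ l, 1 ≤ l → N l 1 = 1)
    (h2 : ∀ m, 2 ≤ m → N 1 m = m - 1)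
    (h3 : ∀ l m, 2 ≤ m → m < l → N l m = N m m)
    (h4 : ∀ l m, 2 ≤ l → l ≤ m → N l m = ∑ j ∈ Finset.Icc 1 (m - 1), N (l - 1) j) :
    ∀ l, 1 ≤ l → ∀ m, 1 ≤ m →
      (m = 1 → N l m = 1) ∧
      (2 ≤ m → m - 1 ≤ l → N l m = 2 ^ (m - 2)) ∧
      (2 ≤ m → 1 ≤ l → l ≤ m - 2 →
        N l m = ∑ j ∈ Finset.range (l + 1), Nat.choose (m - 2) j) := by
  intro l hl m _
  have hN : ∀ ℓ n, N (ℓ + 1) (n + 2) = binomPartialSum (ℓ + 1) n :=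
    eq_binomPartialSum_of_recurrence N h1 h2 h3 h4
  refine ⟨fun hm => hm ▸ h1 l hl, fun hm hml => ?_, fun hm _ _ => ?_⟩
  all_goals
    obtain ⟨ℓ, rfl⟩ := Nat.exists_eq_add_of_le' hl
    obtain ⟨n, rfl⟩ := Nat.exists_eq_add_of_le' hm
    rw [hN, Nat.add_sub_cancel]
  · exact binomPartialSum_of_le (by omega)
  · rfl
end

section
/- Let N : ℕ → ℕ → ℕ satisfy the recurrence N(ℓ,1) = 1 for all ℓ ≥ 1; N(1,m) = m − 1 for all m ≥ 2; N(ℓ,m) = N(m,m) for all ℓ > m ≥ 2; and N(ℓ,m) = ∑_{j=1}^{m−1} N(ℓ−1,j) for all 2 ≤ ℓ ≤ m. Define the oracle capacity F by F(1,m) = m and F(ℓ,m) = ∑_{j=1}^{m} N(ℓ−1,j) for ℓ ≥ 2. Then for all ℓ ≥ 1 and m ≥ 1: F(ℓ,m) = 2^(m−1) if ℓ ≥ m − 1, and F(ℓ,m) = ∑_{j=0}^{ℓ} C(m−1, j) if 1 ≤ ℓ ≤ m − 2, where C(·,·) denotes the binomial coefficient. -/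
/-!
Write `S(n, k) = ∑_{i ≤ k} C(n, i)`. By induction on the level, `N(ℓ, j + 2) = S(j, ℓ)`: at level 1
this is `j + 1`; for `ℓ ≤ j + 2` the recurrence sums the previous level, and the Pascal rule
`S(n + 1, k + 1) = S(n, k + 1) + S(n, k)` telescopes that sum; for `ℓ > j + 2` both sides equal
`2^j`, since `S(n, k) = 2^n` once `k ≥ n`. The same telescoping gives `F(ℓ, m + 1) = S(m, ℓ)`,
which is the claimed formula in both ranges.
-/

open Finset

def partialChooseSum (n k : ℕ) : ℕ := ∑ i ∈ range (k + 1), n.choose i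

@[simp]
lemma partialChooseSum_zero_left (k : ℕ) : partialChooseSum 0 k = 1 := by
  simp [partialChooseSum, sum_range_succ']

@[simp]
lemma partialChooseSum_one_right (n : ℕ) : partialChooseSum n 1 = n + 1 := by
  simp [partialChooseSum, sum_range_succ, add_comm]

lemma partialChooseSum_succ_succ (n k : ℕ) :
    partialChooseSum (n + 1) (k + 1) = partialChooseSum n (k + 1) + partialChooseSum n k := by
  simp only [partialChooseSum]
  rw [sum_range_succ', sum_range_succ' (fun i => n.choose i)]
  simp only [Nat.choose_succ_succ, sum_add_distrib, Nat.choose_zero_right]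
  ring

lemma partialChooseSum_of_le {n k : ℕ} (h : n ≤ k) : partialChooseSum n k = 2 ^ n := by
  rw [← Nat.sum_range_choose, partialChooseSum]
  refine (sum_subset (range_subset_range.2 (by omega)) fun i hik hin => ?_).symm
  rw [mem_range] at hik hin
  exact Nat.choose_eq_zero_of_lt (by omega)

lemma sum_Icc_one_eq_partialChooseSum (f : ℕ → ℕ) (k : ℕ) (hf₁ : f 1 = 1)
    (hf : ∀ j, f (j + 2) = partialChooseSum j k) (n : ℕ) :
    ∑ j ∈ Icc 1 (n + 1), f j = partialChooseSum n (k + 1) := by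
  induction n with
  | zero => simp [hf₁]
  | succ n ih =>
    rw [sum_Icc_succ_top (by omega), ih, hf, partialChooseSum_succ_succ]

section Capacity

variable (N : ℕ → ℕ → ℕ)
  (h1 : ∀ l, 1 ≤ l → N l 1 = 1)
  (h2 : ∀ m, 2 ≤ m → N 1 m = m - 1)
  (h3 : ∀ l m, 2 ≤ m → m < l → N l m = N m m)
  (h4 : ∀ l m, 2 ≤ l → l ≤ m → N l m = ∑ j ∈ Icc 1 (m - 1), N (l - 1) j)
include h1 h2 h3 h4

lemma capacity_eq_partialChooseSum (l j : ℕ) : N (l + 1) (j + 2) = partialChooseSum j (l + 1) := by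
  induction l using Nat.strong_induction_on generalizing j with
  | _ l ih =>
    rcases l with _ | l
    · simp [h2]
    obtain hlt | hle := lt_or_ge (j + 2) (l + 2)
    · rw [h3 _ _ (by omega) hlt, ih (j + 1) (by omega), partialChooseSum_of_le (by omega),
        partialChooseSum_of_le (by omega)]
    · rw [h4 _ _ (by omega) hle]
      exact sum_Icc_one_eq_partialChooseSum _ _ (h1 _ (by omega)) (ih l (by omega)) j

lemma oracleCapacity_eq_partialChooseSum (F : ℕ → ℕ → ℕ) (hF1 : ∀ m, F 1 m = m)
    (hF2 : ∀ l m, 2 ≤ l → F l m = ∑ j ∈ Icc 1 m, N (l - 1) j) (l m : ℕ) :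
    F (l + 1) (m + 1) = partialChooseSum m (l + 1) := by
  rcases l with _ | l
  · simp [hF1]
  · rw [hF2 _ _ (by omega)]
    exact sum_Icc_one_eq_partialChooseSum _ _ (h1 _ (by omega))
      (capacity_eq_partialChooseSum N h1 h2 h3 h4 l) m

end Capacity

theorem oracle_capacity_formula
    (N : ℕ → ℕ → ℕ)
    (h1 : ∀ l, 1 ≤ l → N l 1 = 1)
    (h2 : ∀ m, 2 ≤ m → N 1 m = m - 1)
    (h3 : ∀ l m, 2 ≤ m → m < l → N l m = N m m)
    (h4 : ∀ l m, 2 ≤ l → l ≤ m → N l m = ∑ j ∈ Finset.Icc 1 (m - 1), N (l - 1) j)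
    (F : ℕ → ℕ → ℕ)
    (hF1 : ∀ m, F 1 m = m)
    (hF2 : ∀ l m, 2 ≤ l → F l m = ∑ j ∈ Finset.Icc 1 m, N (l - 1) j) :
    ∀ l, 1 ≤ l → ∀ m, 1 ≤ m →
      (m - 1 ≤ l → F l m = 2 ^ (m - 1)) ∧
      (1 ≤ l → l ≤ m - 2 →
        F l m = ∑ j ∈ Finset.range (l + 1), Nat.choose (m - 1) j) := by
  intro l hl m hm
  obtain ⟨l, rfl⟩ : ∃ k, l = k + 1 := ⟨l - 1, by omega⟩
  obtain ⟨m, rfl⟩ : ∃ k, m = k + 1 := ⟨m - 1, by omega⟩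
  have hF := oracleCapacity_eq_partialChooseSum N h1 h2 h3 h4 F hF1 hF2 l m
  simp only [Nat.add_sub_cancel]
  exact ⟨fun hml => hF.trans (partialChooseSum_of_le hml), fun _ _ => hF⟩
end

section
/- Let K : ℕ → ℕ → ℕ satisfy the recurrence K(ℓ,1) = 1 for all ℓ ≥ 1; K(1,m) = 2(m−1) for all m ≥ 2; K(ℓ,m) = K(m,m) for all ℓ > m ≥ 2; and K(ℓ,m) = 2·∑_{j=1}^{m−1} K(ℓ−1,j) for all 2 ≤ ℓ ≤ m. Then for all ℓ ≥ 1 and m ≥ 1: K(ℓ,m) = 1 if m = 1; K(ℓ,m) = 2·3^(m−2) if m ≥ 2 and ℓ ≥ m − 1; and K(ℓ,m) = ∑_{j=1}^{ℓ} C(m−2, j−1)·2^(j−1) + ∑_{j=0}^{ℓ} C(m−2, j)·2^j if m ≥ 2 and 1 ≤ ℓ ≤ m − 2, where C(·,·) denotes the binomial coefficient. -/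
/-!
Let `S a n = ∑_{i ≤ a} C(n, i) 2^i` be the truncation of the binomial expansion of `3^n = (2 + 1)^n`.
Then `K (l + 1) (n + 2) = S l n + S (l + 1) n`. Pascal's rule gives
`S (a + 1) (n + 1) = S (a + 1) n + 2 S a n`, so `1 + 2 ∑_{k < n} S a k` telescopes to `S (a + 1) n`,
which is exactly the shape of the recurrence for `2 ≤ l ≤ m`. Once `a ≥ n` the truncation is the whole
expansion, `S a n = 3^n`, which makes the formula constant in `l` for `l > m`, as the recurrence requires.
-/

open Finset

theorem sum_Icc_one_eq_sum_range {M : Type*} [AddCommMonoid M] (f : ℕ → M) (n : ℕ) :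
    ∑ j ∈ Icc 1 n, f j = ∑ i ∈ range n, f (i + 1) := by
  rw [← Ico_add_one_right_eq_Icc, sum_Ico_eq_sum_range]
  simp only [add_tsub_cancel_right, add_comm 1]

section partialBinomialSum

variable {R : Type*} [CommSemiring R] (x : R)

def partialBinomialSum (a n : ℕ) : R := ∑ i ∈ range (a + 1), (n.choose i : R) * x ^ i

theorem partialBinomialSum_zero_left (n : ℕ) : partialBinomialSum x 0 n = 1 := by
  simp [partialBinomialSum]

theorem partialBinomialSum_one_left (n : ℕ) : partialBinomialSum x 1 n = 1 + n * x := by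
  simp [partialBinomialSum, sum_range_succ]

theorem partialBinomialSum_zero_right (a : ℕ) : partialBinomialSum x a 0 = 1 := by
  simp [partialBinomialSum, sum_range_succ', Nat.choose_zero_succ]

theorem partialBinomialSum_eq_add_pow {a n : ℕ} (h : n ≤ a) :
    partialBinomialSum x a n = (x + 1) ^ n := by
  rw [partialBinomialSum, add_pow, ← sum_subset (range_subset_range.2 (by omega : n + 1 ≤ a + 1))]
  · exact sum_congr rfl fun i _ => by rw [one_pow, mul_one, mul_comm]
  · intro i _ hi
    rw [Nat.choose_eq_zero_of_lt (by simpa using hi), Nat.cast_zero, zero_mul]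

theorem partialBinomialSum_succ_succ (a n : ℕ) :
    partialBinomialSum x (a + 1) (n + 1) =
      partialBinomialSum x (a + 1) n + x * partialBinomialSum x a n := by
  simp only [partialBinomialSum]
  rw [sum_range_succ' _ (a + 1), sum_range_succ' (fun i => (n.choose i : R) * x ^ i) (a + 1)]
  simp only [Nat.choose_succ_succ, Nat.choose_zero_right, Nat.cast_add, add_mul, sum_add_distrib,
    mul_sum, pow_succ', mul_left_comm x]
  abel

theorem one_add_mul_sum_partialBinomialSum (a n : ℕ) :
    1 + x * ∑ k ∈ range n, partialBinomialSum x a k = partialBinomialSum x (a + 1) n := by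
  induction n with
  | zero => simp [partialBinomialSum_zero_right]
  | succ n ih =>
    rw [sum_range_succ, mul_add, ← add_assoc, ih, partialBinomialSum_succ_succ]

end partialBinomialSum

theorem gateCount_eq_partialBinomialSum (K : ℕ → ℕ → ℕ)
    (h1 : ∀ l, 1 ≤ l → K l 1 = 1)
    (h2 : ∀ m, 2 ≤ m → K 1 m = 2 * (m - 1))
    (h3 : ∀ l m, 2 ≤ m → m < l → K l m = K m m)
    (h4 : ∀ l m, 2 ≤ l → l ≤ m → K l m = 2 * ∑ j ∈ Icc 1 (m - 1), K (l - 1) j) (l n : ℕ) :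
    K (l + 1) (n + 2) = partialBinomialSum 2 l n + partialBinomialSum 2 (l + 1) n := by
  induction l using Nat.strong_induction_on generalizing n with
  | _ l ih =>
  rcases l with _ | l
  · rw [h2 _ (by omega), partialBinomialSum_zero_left, partialBinomialSum_one_left, Nat.cast_id]
    omega
  by_cases hln : l ≤ n
  · have hsum : ∑ j ∈ Icc 1 (n + 1), K (l + 1) j =
        1 + ∑ k ∈ range n, (partialBinomialSum 2 l k + partialBinomialSum 2 (l + 1) k) := by
      rw [sum_Icc_one_eq_sum_range, sum_range_succ', h1 _ (by omega), add_comm]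
      exact congrArg _ (sum_congr rfl fun k _ => ih l (by omega) k)
    rw [h4 _ _ (by omega) (by omega), Nat.add_sub_cancel, show n + 2 - 1 = n + 1 from rfl, hsum, sum_add_distrib,
      ← one_add_mul_sum_partialBinomialSum, ← one_add_mul_sum_partialBinomialSum]
    ring
  · rw [h3 _ _ (by omega) (by omega), ih (n + 1) (by omega) n]
    rw [partialBinomialSum_eq_add_pow _ (show n ≤ n + 1 by omega),
      partialBinomialSum_eq_add_pow _ (show n ≤ n + 2 by omega),
      partialBinomialSum_eq_add_pow _ (show n ≤ l + 1 by omega),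
      partialBinomialSum_eq_add_pow _ (show n ≤ l + 2 by omega)]

theorem gate_count_formula
    (K : ℕ → ℕ → ℕ)
    (h1 : ∀ l, 1 ≤ l → K l 1 = 1)
    (h2 : ∀ m, 2 ≤ m → K 1 m = 2 * (m - 1))
    (h3 : ∀ l m, 2 ≤ m → m < l → K l m = K m m)
    (h4 : ∀ l m, 2 ≤ l → l ≤ m → K l m = 2 * ∑ j ∈ Finset.Icc 1 (m - 1), K (l - 1) j) :
    ∀ l, 1 ≤ l → ∀ m, 1 ≤ m →
      (m = 1 → K l m = 1) ∧
      (2 ≤ m → m - 1 ≤ l → K l m = 2 * 3 ^ (m - 2)) ∧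
      (2 ≤ m → 1 ≤ l → l ≤ m - 2 →
        K l m = (∑ j ∈ Finset.Icc 1 l, Nat.choose (m - 2) (j - 1) * 2 ^ (j - 1)) +
                ∑ j ∈ Finset.range (l + 1), Nat.choose (m - 2) j * 2 ^ j) := by
  intro l hl m _
  have hK := gateCount_eq_partialBinomialSum K h1 h2 h3 h4
  obtain ⟨l, rfl⟩ : ∃ l', l = l' + 1 := ⟨l - 1, by omega⟩
  refine ⟨fun hm => hm ▸ h1 _ hl, fun hm hml => ?_, fun hm _ _ => ?_⟩ <;>
    obtain ⟨n, rfl⟩ : ∃ n, m = n + 2 := ⟨m - 2, by omega⟩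
  · rw [hK, partialBinomialSum_eq_add_pow _ (by omega), partialBinomialSum_eq_add_pow _ (by omega)]
    simp only [Nat.add_sub_cancel]
    ring
  · rw [hK, sum_Icc_one_eq_sum_range]
    simp [partialBinomialSum]
end

section
/- Let N : ℕ → ℕ → ℕ satisfy the recurrence N(ℓ,1) = 1 for all ℓ ≥ 1; N(1,m) = m − 1 for all m ≥ 2; N(ℓ,m) = N(m,m) for all ℓ > m ≥ 2; and N(ℓ,m) = ∑_{j=1}^{m−1} N(ℓ−1,j) for all 2 ≤ ℓ ≤ m. Then for all m ≥ 3 and all ℓ ≥ m − 2, N(ℓ,m) = 2^(m−2). -/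
/-!
Strong induction on `m`. For `2 ≤ ℓ ≤ m` the recurrence writes `N(ℓ,m)` as a sum of values
`N(ℓ-1,j)` with `j < m` that are already saturated, and `1 + 1 + 2 + ⋯ + 2^(m-3) = 2^(m-2)`;
for `ℓ > m` the value is that at `ℓ = m`. The row `ℓ = 1` only meets the range `ℓ ≥ m - 2`
at `m ≤ 3`, where `m - 1 = 2^(m-2)`.
-/

open Finset

/-- In `ℕ`, `2 ^ (1 - 2) = 1`, so the leading term `N(ℓ,1) = 1` is part of the same geometric sum. -/
lemma sum_Icc_two_pow_sub_two (k : ℕ) : ∑ j ∈ Icc 1 (k + 1), 2 ^ (j - 2) = 2 ^ k := by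
  induction k with
  | zero => simp
  | succ k ih =>
    rw [sum_Icc_succ_top (by omega), ih, show k + 1 + 1 - 2 = k by omega, pow_succ]
    ring

section Capacity

variable (N : ℕ → ℕ → ℕ)
  (h1 : ∀ l, 1 ≤ l → N l 1 = 1)
  (h2 : ∀ m, 2 ≤ m → N 1 m = m - 1)
  (h3 : ∀ l m, 2 ≤ m → m < l → N l m = N m m)
  (h4 : ∀ l m, 2 ≤ l → l ≤ m → N l m = ∑ j ∈ Icc 1 (m - 1), N (l - 1) j)

include h2 h4 in
lemma capacity_eq_two_pow_of_le {m : ℕ} (hm : 2 ≤ m)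
    (ih : ∀ j < m, 1 ≤ j → ∀ l, 1 ≤ l → j - 2 ≤ l → N l j = 2 ^ (j - 2))
    {l : ℕ} (hl : 1 ≤ l) (hml : m - 2 ≤ l) (hlm : l ≤ m) : N l m = 2 ^ (m - 2) := by
  rcases hl.eq_or_lt with rfl | hl
  · rw [h2 m hm]
    obtain rfl | rfl : m = 2 ∨ m = 3 := by omega
    all_goals rfl
  calc N l m = ∑ j ∈ Icc 1 (m - 1), N (l - 1) j := h4 l m hl hlm
    _ = ∑ j ∈ Icc 1 (m - 2 + 1), 2 ^ (j - 2) := by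
      rw [show m - 1 = m - 2 + 1 by omega]
      refine sum_congr rfl fun j hj => ?_
      rw [mem_Icc] at hj
      exact ih j (by omega) hj.1 (l - 1) (by omega) (by omega)
    _ = 2 ^ (m - 2) := sum_Icc_two_pow_sub_two _

include h1 h2 h3 h4 in
lemma capacity_eq_two_pow (m : ℕ) (hm : 1 ≤ m) (l : ℕ) (hl : 1 ≤ l) (hml : m - 2 ≤ l) :
    N l m = 2 ^ (m - 2) := by
  induction m using Nat.strong_induction_on generalizing l with
  | _ m ih =>
    rcases hm.eq_or_lt with rfl | hm
    · exact h1 l hl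
    rcases le_or_gt l m with hlm | hlm
    · exact capacity_eq_two_pow_of_le N h2 h4 hm ih hl hml hlm
    · rw [h3 l m hm hlm]
      exact capacity_eq_two_pow_of_le N h2 h4 hm ih (by omega) (by omega) le_rfl

end Capacity

theorem capacity_saturation
    (N : ℕ → ℕ → ℕ)
    (h1 : ∀ l, 1 ≤ l → N l 1 = 1)
    (h2 : ∀ m, 2 ≤ m → N 1 m = m - 1)
    (h3 : ∀ l m, 2 ≤ m → m < l → N l m = N m m)
    (h4 : ∀ l m, 2 ≤ l → l ≤ m → N l m = ∑ j ∈ Finset.Icc 1 (m - 1), N (l - 1) j) :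
    ∀ m, 3 ≤ m → ∀ l, m - 2 ≤ l → N l m = 2 ^ (m - 2) :=
  fun m hm l hml => capacity_eq_two_pow N h1 h2 h3 h4 m (by omega) l (by omega) hml
end

section
/- Let N : ℕ → ℕ → ℕ satisfy the recurrence N(ℓ,1) = 1 for all ℓ ≥ 1; N(1,m) = m − 1 for all m ≥ 2; N(ℓ,m) = N(m,m) for all ℓ > m ≥ 2; and N(ℓ,m) = ∑_{j=1}^{m−1} N(ℓ−1,j) for all 2 ≤ ℓ ≤ m. Define T(ℓ,m) := N(ℓ,m) − N(ℓ−1,m). Then for all m ≥ 4, T(m−2, m) = 1. -/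
/-!
Let `D(l, m) = N(l, m) - N(l - 1, m)`. Below the diagonal `N(l, j) = N(j, j)` no longer depends
on `l`, so in `D(l + 1, m + 1) = ∑_{j < m + 1} D(l, j)` only the terms with `l ≤ j ≤ m` survive.
Starting from `D(2, 2) = D(2, 3) = 0` and `D(2, 4) = 1`, this gives by induction on `l` that
`D(l, l) = D(l, l + 1) = 0` and `D(l, l + 2) = 1` for all `l ≥ 2`.
-/

open Finset

structure IsCapacity (N : ℕ → ℕ → ℕ) : Prop where
  eq_one : ∀ l, 1 ≤ l → N l 1 = 1
  level_one : ∀ m, 2 ≤ m → N 1 m = m - 1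
  eq_diag_of_lt : ∀ l m, 2 ≤ m → m < l → N l m = N m m
  eq_sum : ∀ l m, 2 ≤ l → l ≤ m → N l m = ∑ j ∈ Icc 1 (m - 1), N (l - 1) j

def levelDiff (N : ℕ → ℕ → ℕ) (l m : ℕ) : ℤ := N l m - N (l - 1) m

namespace IsCapacity

variable {N : ℕ → ℕ → ℕ} (hN : IsCapacity N)

include hN

theorem eq_diag {l j : ℕ} (hj : 1 ≤ j) (hjl : j ≤ l) : N l j = N j j := by
  obtain rfl | hj := eq_or_lt_of_le hj
  · rw [hN.eq_one l hjl, hN.eq_one 1 le_rfl]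
  obtain rfl | hjl := eq_or_lt_of_le hjl
  · rfl
  · exact hN.eq_diag_of_lt l j hj hjl

theorem levelDiff_eq_zero {l j : ℕ} (hj : 1 ≤ j) (hjl : j < l) : levelDiff N l j = 0 := by
  rw [levelDiff, hN.eq_diag hj hjl.le, hN.eq_diag (l := l - 1) hj (by omega), sub_self]

theorem levelDiff_succ_succ {l m : ℕ} (hl : 2 ≤ l) (hlm : l ≤ m) :
    levelDiff N (l + 1) (m + 1) = ∑ j ∈ Icc l m, levelDiff N l j := by
  have hsum : levelDiff N (l + 1) (m + 1) = ∑ j ∈ Icc 1 m, levelDiff N l j := by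
    rw [levelDiff, hN.eq_sum (l + 1) (m + 1) (by omega) (by omega),
      hN.eq_sum (l + 1 - 1) (m + 1) (by omega) (by omega)]
    simp only [levelDiff, Nat.add_sub_cancel, Nat.cast_sum, sum_sub_distrib]
  rw [hsum]
  refine (sum_subset (Icc_subset_Icc_left (by omega)) fun j hj hj' => ?_).symm
  simp only [mem_Icc, not_and_or, not_le] at hj hj'
  exact hN.levelDiff_eq_zero hj.1 (by omega)

theorem levelDiff_self {l : ℕ} (hl : 2 ≤ l) : levelDiff N l l = 0 := by
  induction l, hl using Nat.le_induction with
  | base =>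
    simp [levelDiff, hN.eq_sum 2 2 le_rfl le_rfl, hN.eq_one, hN.level_one]
  | succ l hl ih => rw [hN.levelDiff_succ_succ hl le_rfl, Icc_self, sum_singleton, ih]

theorem levelDiff_self_add_one {l : ℕ} (hl : 2 ≤ l) : levelDiff N l (l + 1) = 0 := by
  induction l, hl using Nat.le_induction with
  | base =>
    simp [levelDiff, hN.eq_sum 2 3 le_rfl (by norm_num), sum_Icc_succ_top, hN.eq_one,
      hN.level_one]
  | succ l hl ih =>
    rw [hN.levelDiff_succ_succ hl (by omega), sum_Icc_succ_top (by omega), Icc_self,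
      sum_singleton, hN.levelDiff_self hl, ih, add_zero]

theorem levelDiff_self_add_two {l : ℕ} (hl : 2 ≤ l) : levelDiff N l (l + 2) = 1 := by
  induction l, hl using Nat.le_induction with
  | base =>
    simp [levelDiff, hN.eq_sum 2 4 le_rfl (by norm_num), sum_Icc_succ_top, hN.eq_one,
      hN.level_one]
  | succ l hl ih =>
    rw [hN.levelDiff_succ_succ hl (by omega), sum_Icc_succ_top (by omega),
      sum_Icc_succ_top (by omega), Icc_self, sum_singleton, hN.levelDiff_self hl,
      hN.levelDiff_self_add_one hl, ih, zero_add, zero_add]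

end IsCapacity

theorem T_boundary_one
    (N : ℕ → ℕ → ℕ)
    (h1 : ∀ l, 1 ≤ l → N l 1 = 1)
    (h2 : ∀ m, 2 ≤ m → N 1 m = m - 1)
    (h3 : ∀ l m, 2 ≤ m → m < l → N l m = N m m)
    (h4 : ∀ l m, 2 ≤ l → l ≤ m → N l m = ∑ j ∈ Finset.Icc 1 (m - 1), N (l - 1) j)
    (T : ℕ → ℕ → ℤ)
    (hT : ∀ l m, T l m = (N l m : ℤ) - (N (l - 1) m : ℤ)) :
    ∀ m, 4 ≤ m → T (m - 2) m = 1 := by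
  intro m hm
  obtain ⟨l, rfl⟩ : ∃ l, m = l + 2 := ⟨m - 2, by omega⟩
  rw [hT, Nat.add_sub_cancel]
  exact (IsCapacity.mk h1 h2 h3 h4).levelDiff_self_add_two (by omega)
end

section
/- Let N : ℕ → ℕ → ℕ satisfy the recurrence N(ℓ,1) = 1 for all ℓ ≥ 1; N(1,m) = m − 1 for all m ≥ 2; N(ℓ,m) = N(m,m) for all ℓ > m ≥ 2; and N(ℓ,m) = ∑_{j=1}^{m−1} N(ℓ−1,j) for all 2 ≤ ℓ ≤ m. Define T(ℓ,m) := N(ℓ,m) − N(ℓ−1,m). Then for all m ≥ 4 and all ℓ with 2 ≤ ℓ ≤ m − 2, T(ℓ,m) = C(m−2, ℓ), where C(·,·) denotes the binomial coefficient. -/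
/-!
The recurrence has the closed form `N(ℓ, m) = ∑_{k ≤ ℓ} C(m - 2, k)` for `ℓ, m ≥ 1`: the partial
row sums of Pascal's triangle satisfy the defining sum recurrence by Pascal's rule, and once
`ℓ > m - 2` they have saturated at `2 ^ (m - 2)`, matching `N(ℓ, m) = N(m, m)`. Consecutive
closed forms differ by the single term `C(m - 2, ℓ)`.
-/

open Finset

namespace Nat

theorem sum_range_choose_of_lt {n r : ℕ} (h : n < r) : ∑ k ∈ range r, n.choose k = 2 ^ n := by
  rw [← sum_range_choose n]
  refine (sum_subset (range_subset_range.2 h) fun k _ hkn => ?_).symm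
  exact choose_eq_zero_of_lt (by simpa using hkn)

theorem sum_range_choose_succ_left (n l : ℕ) :
    ∑ k ∈ range (l + 2), (n + 1).choose k =
      ∑ k ∈ range (l + 2), n.choose k + ∑ k ∈ range (l + 1), n.choose k := by
  rw [sum_range_succ' _ (l + 1), sum_range_succ' (n.choose ·) (l + 1)]
  simp only [choose_succ_succ', sum_add_distrib, choose_zero_right]
  ring

theorem sum_Icc_sum_range_choose_sub_two (n l : ℕ) :
    ∑ j ∈ Icc 1 (n + 1), ∑ k ∈ range (l + 1), (j - 2).choose k =
      ∑ k ∈ range (l + 2), n.choose k := by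
  induction n with
  | zero => simp [sum_range_succ']
  | succ n ih =>
    rw [sum_Icc_succ_top (by omega), ih, show n + 1 + 1 - 2 = n by omega,
      sum_range_choose_succ_left]

end Nat

theorem eq_sum_range_choose_of_recurrence (N : ℕ → ℕ → ℕ)
    (h1 : ∀ l, 1 ≤ l → N l 1 = 1)
    (h2 : ∀ m, 2 ≤ m → N 1 m = m - 1)
    (h3 : ∀ l m, 2 ≤ m → m < l → N l m = N m m)
    (h4 : ∀ l m, 2 ≤ l → l ≤ m → N l m = ∑ j ∈ Icc 1 (m - 1), N (l - 1) j) :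
    ∀ l, 1 ≤ l → ∀ m, 1 ≤ m → N l m = ∑ k ∈ range (l + 1), (m - 2).choose k := by
  intro l hl m hm
  induction l using Nat.strong_induction_on generalizing m with
  | _ l ih =>
    obtain rfl | hm2 := (show m = 1 ∨ 2 ≤ m by omega)
    · simp [h1 l hl, sum_range_succ']
    obtain ⟨n, rfl⟩ := Nat.exists_eq_add_of_le' hm2
    obtain rfl | hl2 := (show l = 1 ∨ 2 ≤ l by omega)
    · simp [h2 _ hm2, sum_range_succ, add_comm]
    obtain ⟨l, rfl⟩ := Nat.exists_eq_add_of_le' hl2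
    rcases le_or_gt (l + 2) (n + 2) with hle | hlt
    · calc N (l + 2) (n + 2)
          = ∑ j ∈ Icc 1 (n + 1), ∑ k ∈ range (l + 2), (j - 2).choose k := by
            rw [h4 _ _ le_add_self hle]
            exact sum_congr rfl fun j hj => ih (l + 1) (by omega) (by omega) j (mem_Icc.1 hj).1
        _ = ∑ k ∈ range (l + 3), n.choose k := Nat.sum_Icc_sum_range_choose_sub_two n (l + 1)
    · rw [h3 _ _ le_add_self hlt, ih (n + 2) hlt le_add_self (n + 2) hm, Nat.add_sub_cancel,
        Nat.sum_range_choose_of_lt (by omega), Nat.sum_range_choose_of_lt (by omega)]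

theorem T_binomial
    (N : ℕ → ℕ → ℕ)
    (h1 : ∀ l, 1 ≤ l → N l 1 = 1)
    (h2 : ∀ m, 2 ≤ m → N 1 m = m - 1)
    (h3 : ∀ l m, 2 ≤ m → m < l → N l m = N m m)
    (h4 : ∀ l m, 2 ≤ l → l ≤ m → N l m = ∑ j ∈ Finset.Icc 1 (m - 1), N (l - 1) j)
    (T : ℕ → ℕ → ℤ)
    (hT : ∀ l m, T l m = (N l m : ℤ) - (N (l - 1) m : ℤ)) :
    ∀ m, 4 ≤ m → ∀ l, 2 ≤ l → l ≤ m - 2 → T l m = (Nat.choose (m - 2) l : ℤ) := by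
  intro m hm l hl _
  have closed_form := eq_sum_range_choose_of_recurrence N h1 h2 h3 h4
  obtain ⟨l, rfl⟩ := Nat.exists_eq_add_of_le' (show 1 ≤ l by omega)
  rw [hT, Nat.add_sub_cancel, closed_form _ (by omega) m (by omega),
    closed_form l (by omega) m (by omega), sum_range_succ _ (l + 1)]
  push_cast
  ring
end

section
/- Let N : ℕ → ℕ → ℕ satisfy the recurrence N(ℓ,1) = 1 for all ℓ ≥ 1; N(1,m) = m − 1 for all m ≥ 2; N(ℓ,m) = N(m,m) for all ℓ > m ≥ 2; and N(ℓ,m) = ∑_{j=1}^{m−1} N(ℓ−1,j) for all 2 ≤ ℓ ≤ m. Then for all m ≥ 5 and all ℓ with 2 ≤ ℓ ≤ m − 3, N(ℓ,m) = ∑_{j=0}^{ℓ} C(m−2, j), where C(·,·) denotes the binomial coefficient. -/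
/-!
The recurrence determines `N` on positive arguments (strong induction on `ℓ`), so it suffices to
check that the closed form `∑_{j ≤ ℓ} C(m - 2, j)` satisfies it. Writing `S_ℓ(n) = ∑_{j ≤ ℓ} C(n, j)`,
Pascal's rule gives `S_{ℓ+1}(n + 1) = S_{ℓ+1}(n) + S_ℓ(n)`, from which the summation rule follows by
induction on `m`; the rule `N(ℓ, m) = N(m, m)` for `m < ℓ` holds because both sides are the full
row sum `2^(m-2)`.
-/

open Finset

structure IsCapacityRecurrence (N : ℕ → ℕ → ℕ) : Prop where
  apply_one_right : ∀ l, 1 ≤ l → N l 1 = 1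
  apply_one_left : ∀ m, 2 ≤ m → N 1 m = m - 1
  apply_of_lt : ∀ l m, 2 ≤ m → m < l → N l m = N m m
  apply_eq_sum : ∀ l m, 2 ≤ l → l ≤ m → N l m = ∑ j ∈ Icc 1 (m - 1), N (l - 1) j

theorem IsCapacityRecurrence.eq_of_pos {N N' : ℕ → ℕ → ℕ} (hN : IsCapacityRecurrence N)
    (hN' : IsCapacityRecurrence N') : ∀ l, 1 ≤ l → ∀ m, 1 ≤ m → N l m = N' l m := by
  intro l
  induction l using Nat.strong_induction_on with
  | _ l ih =>
  intro hl m hm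
  obtain rfl | hm := eq_or_lt_of_le hm
  · rw [hN.apply_one_right l hl, hN'.apply_one_right l hl]
  obtain rfl | hl := eq_or_lt_of_le hl
  · rw [hN.apply_one_left m hm, hN'.apply_one_left m hm]
  rcases le_or_gt l m with hlm | hml
  · rw [hN.apply_eq_sum l m hl hlm, hN'.apply_eq_sum l m hl hlm]
    exact sum_congr rfl fun j hj => ih (l - 1) (by omega) (by omega) j (mem_Icc.1 hj).1
  · rw [hN.apply_of_lt l m hm hml, hN'.apply_of_lt l m hm hml]
    exact ih m hml (by omega) m (by omega)

theorem sum_range_choose_succ (n l : ℕ) :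
    ∑ i ∈ range (l + 2), (n + 1).choose i =
      ∑ i ∈ range (l + 2), n.choose i + ∑ i ∈ range (l + 1), n.choose i := by
  rw [sum_range_succ' _ (l + 1), sum_range_succ' (n.choose ·) (l + 1)]
  simp only [Nat.choose_succ_succ', sum_add_distrib, Nat.choose_zero_right]
  ring

theorem sum_range_choose_of_le {n l : ℕ} (h : n ≤ l) :
    ∑ i ∈ range (l + 1), n.choose i = 2 ^ n := by
  rw [← Nat.sum_range_choose n]
  refine (sum_subset (range_subset_range.2 (by omega)) fun i _ hi => ?_).symm
  exact Nat.choose_eq_zero_of_lt (by simpa using hi)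

/-- For `m = 1` the truncated subtraction `m - 2 = 0` gives the value `1`, as required. -/
def capacityFormula (l m : ℕ) : ℕ := ∑ j ∈ range (l + 1), (m - 2).choose j

theorem capacityFormula_one_right (l : ℕ) : capacityFormula l 1 = 1 := by
  simp [capacityFormula, sum_range_succ']

theorem capacityFormula_one_left {m : ℕ} (hm : 2 ≤ m) : capacityFormula 1 m = m - 1 := by
  simp only [capacityFormula, sum_range_succ, range_one, sum_singleton, Nat.choose_zero_right,
    Nat.choose_one_right]
  omega

theorem capacityFormula_of_le {l m : ℕ} (h : m - 2 ≤ l) : capacityFormula l m = 2 ^ (m - 2) :=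
  sum_range_choose_of_le h

theorem capacityFormula_succ_succ (l : ℕ) {m : ℕ} (hm : 1 ≤ m) :
    capacityFormula (l + 1) (m + 1) = ∑ j ∈ Icc 1 m, capacityFormula l j := by
  induction m, hm using Nat.le_induction with
  | base => simp [capacityFormula, sum_range_succ']
  | succ m hm ih =>
    obtain ⟨k, rfl⟩ := Nat.exists_eq_add_of_le' hm
    rw [sum_Icc_succ_top (by omega), ← ih]
    exact sum_range_choose_succ k l

theorem isCapacityRecurrence_capacityFormula : IsCapacityRecurrence capacityFormula where
  apply_one_right l _ := capacityFormula_one_right l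
  apply_one_left _ hm := capacityFormula_one_left hm
  apply_of_lt l m _ hml := by rw [capacityFormula_of_le (by omega), capacityFormula_of_le (by omega)]
  apply_eq_sum l m hl hlm := by
    obtain ⟨l, rfl⟩ := Nat.exists_eq_add_of_le' (by omega : 1 ≤ l)
    obtain ⟨m, rfl⟩ := Nat.exists_eq_add_of_le' (by omega : 1 ≤ m)
    exact capacityFormula_succ_succ l (by omega)

theorem capacity_binomial_sum
    (N : ℕ → ℕ → ℕ)
    (h1 : ∀ l, 1 ≤ l → N l 1 = 1)
    (h2 : ∀ m, 2 ≤ m → N 1 m = m - 1)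
    (h3 : ∀ l m, 2 ≤ m → m < l → N l m = N m m)
    (h4 : ∀ l m, 2 ≤ l → l ≤ m → N l m = ∑ j ∈ Finset.Icc 1 (m - 1), N (l - 1) j) :
    ∀ m, 5 ≤ m → ∀ l, 2 ≤ l → l ≤ m - 3 →
      N l m = ∑ j ∈ Finset.range (l + 1), Nat.choose (m - 2) j := by
  intro m hm l hl _
  exact IsCapacityRecurrence.eq_of_pos ⟨h1, h2, h3, h4⟩ isCapacityRecurrence_capacityFormula
    l (by omega) m (by omega)
end

section
/- Let N : ℕ → ℕ → ℕ satisfy the recurrence N(ℓ,1) = 1 for all ℓ ≥ 1; N(1,m) = m − 1 for all m ≥ 2; N(ℓ,m) = N(m,m) for all ℓ > m ≥ 2; and N(ℓ,m) = ∑_{j=1}^{m−1} N(ℓ−1,j) for all 2 ≤ ℓ ≤ m. Then for all m ≥ 4 and all ℓ with 2 ≤ ℓ ≤ m − 2, N(ℓ−1, m) < N(ℓ, m); that is, increasing the recursive level strictly increases the circuit capacity in this range. -/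
/-!
Comparing level `l` with level `l + 1` amounts to comparing the defining sums termwise, so
weak monotonicity `N l m ≤ N (l + 1) m` follows by induction on `l` (on and below the diagonal
both sides equal `N m m`). At level one, `N 2 m = ∑_{j<m} N 1 j` dominates
`N 1 m = m - 1 = ∑_{j<m} 1`, strictly once the summand `N 1 3 = 2` occurs; this strictness then
travels up one level at a time through the last summand `j = m - 1`, which is why `m` must
exceed the level by two.
-/

open Finset

structure IsCapacity_s11 (N : ℕ → ℕ → ℕ) : Prop where
  apply_one : ∀ l, 1 ≤ l → N l 1 = 1
  one_apply : ∀ m, 2 ≤ m → N 1 m = m - 1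
  apply_of_lt : ∀ l m, 2 ≤ m → m < l → N l m = N m m
  apply_eq_sum : ∀ l m, 2 ≤ l → l ≤ m → N l m = ∑ j ∈ Icc 1 (m - 1), N (l - 1) j

namespace IsCapacity_s11

variable {N : ℕ → ℕ → ℕ} (hN : IsCapacity_s11 N) {l m : ℕ}
include hN

theorem succ_apply_eq_sum (hl : 1 ≤ l) (hlm : l + 1 ≤ m) :
    N (l + 1) m = ∑ j ∈ Icc 1 (m - 1), N l j := by
  simpa using hN.apply_eq_sum (l + 1) m (by omega) hlm

theorem apply_eq_succ_apply_of_le (hm : 1 ≤ m) (hml : m ≤ l) : N l m = N (l + 1) m := by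
  obtain rfl | hm2 := hm.eq_or_lt
  · rw [hN.apply_one l hml, hN.apply_one (l + 1) (by omega)]
  · rw [hN.apply_of_lt (l + 1) m hm2 (by omega)]
    obtain rfl | hlt := hml.eq_or_lt
    · rfl
    · exact hN.apply_of_lt l m hm2 hlt

theorem one_le_one_apply (hm : 1 ≤ m) : 1 ≤ N 1 m := by
  obtain rfl | hm2 := hm.eq_or_lt
  · exact (hN.apply_one 1 le_rfl).ge
  · rw [hN.one_apply m hm2]
    omega

theorem one_apply_eq_sum (hm : 2 ≤ m) : N 1 m = ∑ _j ∈ Icc 1 (m - 1), 1 := by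
  simp [hN.one_apply m hm]

theorem one_apply_le_two_apply (hm : 2 ≤ m) : N 1 m ≤ N 2 m := by
  rw [hN.one_apply_eq_sum hm, hN.succ_apply_eq_sum le_rfl hm]
  exact sum_le_sum fun j hj ↦ hN.one_le_one_apply (mem_Icc.1 hj).1

theorem one_apply_lt_two_apply (hm : 4 ≤ m) : N 1 m < N 2 m := by
  rw [hN.one_apply_eq_sum (by omega), hN.succ_apply_eq_sum le_rfl (by omega)]
  refine sum_lt_sum (fun j hj ↦ hN.one_le_one_apply (mem_Icc.1 hj).1) ⟨3, ?_, ?_⟩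
  · simp only [mem_Icc]
    omega
  · rw [hN.one_apply 3 (by norm_num)]
    norm_num

theorem apply_le_succ_apply (hl : 1 ≤ l) (hm : 1 ≤ m) : N l m ≤ N (l + 1) m := by
  induction l, hl using Nat.le_induction generalizing m with
  | base =>
    obtain rfl | hm2 := hm.eq_or_lt
    · exact (hN.apply_eq_succ_apply_of_le le_rfl le_rfl).le
    · exact hN.one_apply_le_two_apply hm2
  | succ l hl ih =>
    obtain hml | hlm := le_or_gt m (l + 1)
    · exact (hN.apply_eq_succ_apply_of_le hm hml).le
    · rw [hN.succ_apply_eq_sum hl hlm.le, hN.succ_apply_eq_sum (by omega) hlm]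
      exact sum_le_sum fun j hj ↦ ih (mem_Icc.1 hj).1

theorem apply_lt_succ_apply (hl : 1 ≤ l) (hm : l + 3 ≤ m) : N l m < N (l + 1) m := by
  induction l, hl using Nat.le_induction generalizing m with
  | base => exact hN.one_apply_lt_two_apply hm
  | succ l hl ih =>
    rw [hN.succ_apply_eq_sum hl (by omega), hN.succ_apply_eq_sum (by omega) (by omega)]
    refine sum_lt_sum (fun j hj ↦ hN.apply_le_succ_apply hl (mem_Icc.1 hj).1) ⟨m - 1, ?_, ih ?_⟩
    · simp only [mem_Icc]
      omega
    · omega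

end IsCapacity_s11

theorem capacity_strict_mono_in_level
    (N : ℕ → ℕ → ℕ)
    (h1 : ∀ l, 1 ≤ l → N l 1 = 1)
    (h2 : ∀ m, 2 ≤ m → N 1 m = m - 1)
    (h3 : ∀ l m, 2 ≤ m → m < l → N l m = N m m)
    (h4 : ∀ l m, 2 ≤ l → l ≤ m → N l m = ∑ j ∈ Finset.Icc 1 (m - 1), N (l - 1) j) :
    ∀ m, 4 ≤ m → ∀ l, 2 ≤ l → l ≤ m - 2 → N (l - 1) m < N l m := by
  intro m hm l hl hlm
  obtain ⟨k, rfl⟩ : ∃ k, l = k + 1 := ⟨l - 1, by omega⟩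
  simpa using (IsCapacity_s11.mk h1 h2 h3 h4).apply_lt_succ_apply (l := k) (by omega) (by omega)
end

section
/- Let E be a real inner product space, let α and β be orthonormal vectors in E, let θ be a real number, and set ψ = cos(θ/2)·α + sin(θ/2)·β. Let O : E → E be a linear map with O(α) = α and O(β) = −β, let W : E → E be the map W(x) = 2⟨ψ, x⟩·ψ − x, and let G = W ∘ O. Then for every natural number k, the k-fold iterate satisfies G^k(ψ) = cos((2k+1)θ/2)·α + sin((2k+1)θ/2)·β. -/
open scoped RealInnerProductSpace

theorem grover_k_iterations
    {E : Type*} [NormedAddCommGroup E] [InnerProductSpace ℝ E]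
    (α β : E) (hα : ‖α‖ = 1) (hβ : ‖β‖ = 1) (hαβ : ⟪α, β⟫ = 0)
    (θ : ℝ) (ψ : E) (hψ : ψ = Real.cos (θ / 2) • α + Real.sin (θ / 2) • β)
    (O : E →ₗ[ℝ] E) (hOα : O α = α) (hOβ : O β = -β)
    (W : E → E) (hW : ∀ x, W x = (2 * ⟪ψ, x⟫) • ψ - x)
    (G : E → E) (hG : G = W ∘ O) :
    ∀ k : ℕ,
      G^[k] ψ = Real.cos ((2 * k + 1) * θ / 2) • α +
                Real.sin ((2 * k + 1) * θ / 2) • β := by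
  have hαα : ⟪α, α⟫ = 1 := by
    rw [real_inner_self_eq_norm_sq, hα]; norm_num
  have hββ : ⟪β, β⟫ = 1 := by
    rw [real_inner_self_eq_norm_sq, hβ]; norm_num
  have hβα : ⟪β, α⟫ = 0 := by rw [real_inner_comm]; exact hαβ
  have key : ∀ φ : ℝ, G (Real.cos φ • α + Real.sin φ • β)
      = Real.cos (φ + θ) • α + Real.sin (φ + θ) • β := by
    intro φ
    have hO : O (Real.cos φ • α + Real.sin φ • β)
        = Real.cos φ • α - Real.sin φ • β := by
      simp [map_add, map_smul, hOα, hOβ, sub_eq_add_neg]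
    have hip : ⟪ψ, Real.cos φ • α - Real.sin φ • β⟫ = Real.cos (φ + θ / 2) := by
      rw [hψ]
      simp only [inner_add_left, inner_sub_right, inner_smul_left, inner_smul_right,
        hαα, hββ, hαβ, hβα, RCLike.conj_to_real]
      rw [Real.cos_add]
      ring
    rw [hG, Function.comp_apply, hO, hW, hip, hψ]
    have hc : Real.cos (φ + θ) = 2 * Real.cos (φ + θ / 2) * Real.cos (θ / 2) - Real.cos φ := by
      have h := Real.cos_add (φ + θ / 2) (θ / 2)
      have h' := Real.cos_sub (φ + θ / 2) (θ / 2)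
      rw [show φ + θ / 2 + θ / 2 = φ + θ by ring] at h
      rw [show φ + θ / 2 - θ / 2 = φ by ring] at h'
      rw [h, h']; ring
    have hs : Real.sin (φ + θ) = 2 * Real.cos (φ + θ / 2) * Real.sin (θ / 2) + Real.sin φ := by
      have h := Real.sin_add (φ + θ / 2) (θ / 2)
      have h' := Real.sin_sub (φ + θ / 2) (θ / 2)
      rw [show φ + θ / 2 + θ / 2 = φ + θ by ring] at h
      rw [show φ + θ / 2 - θ / 2 = φ by ring] at h'
      rw [h, h']; ring
    rw [hc, hs]
    module
  intro k
  induction k with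
  | zero => simpa using hψ
  | succ n ih =>
    rw [Function.iterate_succ_apply', ih, key]
    congr 2 <;> push_cast <;> ring
end

section
/- Let N and M be natural numbers with 1 ≤ M ≤ N, let θ ∈ (0, π] satisfy sin(θ/2) = √(M/N), and let K = round(arccos(√(M/N)) / θ) (rounding to the nearest integer). Then sin((2K+1)θ/2)² ≥ (N − M)/N; that is, after K Grover iterations the probability of measuring a solution is at least 1 − M/N. -/
theorem grover_iteration_count_success
    (N M : ℕ) (hM : 1 ≤ M) (hMN : M ≤ N)
    (θ : ℝ) (hθ : θ ∈ Set.Ioc 0 Real.pi)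
    (hsin : Real.sin (θ / 2) = Real.sqrt ((M : ℝ) / N))
    (K : ℤ) (hK : K = round (Real.arccos (Real.sqrt ((M : ℝ) / N)) / θ)) :
    Real.sin ((2 * (K : ℝ) + 1) * θ / 2) ^ 2 ≥ ((N : ℝ) - M) / N := by
  obtain ⟨hθ0, hθπ⟩ := hθ
  have hN : (0:ℝ) < N := by
    have : 1 ≤ N := le_trans hM hMN
    exact_mod_cast Nat.lt_of_lt_of_le Nat.zero_lt_one this
  have hMN0 : (0:ℝ) ≤ (M:ℝ) / N := by positivity
  -- arccos (√(M/N)) = π/2 - θ/2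
  have hφ : Real.arccos (Real.sqrt ((M : ℝ) / N)) = Real.pi / 2 - θ / 2 := by
    rw [← hsin, ← Real.cos_pi_div_two_sub, Real.arccos_cos (by linarith) (by linarith)]
  set φ : ℝ := Real.pi / 2 - θ / 2 with hφdef
  have hround : |(K:ℝ) - φ / θ| ≤ 1 / 2 := by
    rw [hK, hφ, abs_sub_comm]; exact abs_sub_round (φ / θ)
  have habs : |(K:ℝ) * θ - φ| ≤ θ / 2 := by
    calc |(K:ℝ) * θ - φ| = |((K:ℝ) - φ / θ) * θ| := by
          rw [sub_mul, div_mul_cancel₀ _ (ne_of_gt hθ0)]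
      _ = |(K:ℝ) - φ / θ| * θ := by rw [abs_mul, abs_of_pos hθ0]
      _ ≤ 1 / 2 * θ := mul_le_mul_of_nonneg_right hround (le_of_lt hθ0)
      _ = θ / 2 := by ring
  -- sin((2K+1)θ/2) = cos(Kθ - φ)
  have hsin_eq : Real.sin ((2 * (K : ℝ) + 1) * θ / 2) = Real.cos ((K:ℝ) * θ - φ) := by
    have : (2 * (K : ℝ) + 1) * θ / 2 = ((K:ℝ) * θ - φ) + Real.pi / 2 := by
      rw [hφdef]; ring
    rw [this, Real.sin_add_pi_div_two]
  -- cos(Kθ - φ) ≥ cos(θ/2) ≥ 0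
  have hcos_ge : Real.cos (θ / 2) ≤ Real.cos ((K:ℝ) * θ - φ) := by
    rw [← Real.cos_abs ((K:ℝ) * θ - φ)]
    exact Real.cos_le_cos_of_nonneg_of_le_pi (abs_nonneg _) (by linarith) habs
  have hcos0 : 0 ≤ Real.cos (θ / 2) :=
    Real.cos_nonneg_of_mem_Icc ⟨by linarith [Real.pi_pos], by linarith⟩
  have hsq : Real.cos (θ / 2) ^ 2 ≤ Real.sin ((2 * (K : ℝ) + 1) * θ / 2) ^ 2 := by
    rw [hsin_eq]
    exact pow_le_pow_left₀ hcos0 hcos_ge 2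
  have hcos2 : Real.cos (θ / 2) ^ 2 = ((N : ℝ) - M) / N := by
    have h1 : Real.sin (θ / 2) ^ 2 = (M:ℝ) / N := by
      rw [hsin, Real.sq_sqrt hMN0]
    have h2 := Real.sin_sq_add_cos_sq (θ / 2)
    have h3 : ((N : ℝ) - M) / N = 1 - (M:ℝ)/N := by
      field_simp
    rw [h3]; linarith
  linarith [hsq, hcos2.symm.le]
end

section
/- Work in ℝ^4 with coordinates indexed by Fin 4. Let ψ = (1/2, 1/2, 1/2, 1/2), let W be the 4×4 real matrix with entries W_{ij} = 1/2 − δ_{ij} (i.e., W = (1/2)·J − I where J is the all-ones matrix), let O₁ = diag(1, 1, −1, −1), and let O₂ = diag(1, −1, 1, −1). Then for every natural number k and every index i, the i-th entry of (W·O₂·W·O₁)^k applied to ψ has absolute value 1/2. In particular, the probability of measuring the solution state (index 3) remains 1/4 after any number of iterations of this randomized Grover scheme. -/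
theorem randomized_grover_counterexample
    (ψ : Fin 4 → ℝ) (hψ : ψ = fun _ => 1 / 2)
    (W : Matrix (Fin 4) (Fin 4) ℝ)
    (hW : W = Matrix.of fun i j => 1 / 2 - if i = j then 1 else 0)
    (O₁ O₂ : Matrix (Fin 4) (Fin 4) ℝ)
    (hO₁ : O₁ = Matrix.diagonal ![1, 1, -1, -1])
    (hO₂ : O₂ = Matrix.diagonal ![1, -1, 1, -1]) :
    ∀ (k : ℕ) (i : Fin 4), |((W * O₂ * W * O₁) ^ k).mulVec ψ i| = 1 / 2 := by
  set G : Matrix (Fin 4) (Fin 4) ℝ := W * O₂ * W * O₁ with hGdef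
  have hG : G = Matrix.of ![![0,0,1,0],![0,0,0,-1],![-1,0,0,0],![0,1,0,0]] := by
    subst hW hO₁ hO₂
    ext i j
    fin_cases i <;> fin_cases j <;>
      simp [hGdef, Matrix.mul_apply, Fin.sum_univ_four, Matrix.diagonal,
        Matrix.vecHead, Matrix.vecTail] <;> norm_num
  have key : ∀ k : ℕ,
      (G ^ k).mulVec ψ = ![1/2, 1/2, 1/2, 1/2] ∨
      (G ^ k).mulVec ψ = ![1/2, -(1/2), -(1/2), 1/2] ∨
      (G ^ k).mulVec ψ = ![-(1/2), -(1/2), -(1/2), -(1/2)] ∨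
      (G ^ k).mulVec ψ = ![-(1/2), 1/2, 1/2, -(1/2)] := by
    intro k
    induction k with
    | zero =>
      left
      subst hψ
      ext i; fin_cases i <;> simp
    | succ n ih =>
      have hstep : (G ^ (n + 1)).mulVec ψ = G.mulVec ((G ^ n).mulVec ψ) := by
        rw [pow_succ', Matrix.mulVec_mulVec]
      rcases ih with h | h | h | h
      · right; left
        rw [hstep, h]
        ext i; fin_cases i <;>
          simp [hG, Matrix.mulVec, dotProduct, Fin.sum_univ_four] <;> norm_num
      · right; right; left
        rw [hstep, h]
        ext i; fin_cases i <;>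
          simp [hG, Matrix.mulVec, dotProduct, Fin.sum_univ_four] <;> norm_num
      · right; right; right
        rw [hstep, h]
        ext i; fin_cases i <;>
          simp [hG, Matrix.mulVec, dotProduct, Fin.sum_univ_four] <;> norm_num
      · left
        rw [hstep, h]
        ext i; fin_cases i <;>
          simp [hG, Matrix.mulVec, dotProduct, Fin.sum_univ_four] <;> norm_num
  intro k i
  rcases key k with h | h | h | h <;> rw [h] <;> fin_cases i <;> norm_num
end

section
/- Let N and M be natural numbers with 0 < M < N, and let v be a real number. In ℝ^N (coordinates indexed by Fin N), let O be the diagonal matrix with O_{ii} = −1 for i < M and O_{ii} = v for i ≥ M, let W be the matrix with entries W_{ij} = 2/N − δ_{ij}, and let ψ be the vector with all entries 1/√N. Define the 2×2 matrices O₂ = diag(−1, v) and W₂ = (2/N)·[[M, N−M], [M, N−M]] − I, and the 2-vector ψ₂ = (1/√N, 1/√N). Then for every natural number K and every index i: the i-th entry of (W·O)^K ψ equals the first entry of (W₂·O₂)^K ψ₂ if i < M, and equals the second entry of (W₂·O₂)^K ψ₂ if i ≥ M. -/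
theorem expected_grover_dimension_reduction
    (N M : ℕ) (hM : 0 < M) (hMN : M < N) (v : ℝ)
    (O : Matrix (Fin N) (Fin N) ℝ)
    (hO : O = Matrix.diagonal fun i : Fin N => if (i : ℕ) < M then -1 else v)
    (W : Matrix (Fin N) (Fin N) ℝ)
    (hW : W = Matrix.of fun i j => 2 / (N : ℝ) - if i = j then 1 else 0)
    (ψ : Fin N → ℝ) (hψ : ψ = fun _ => 1 / Real.sqrt N)
    (O₂ : Matrix (Fin 2) (Fin 2) ℝ) (hO₂ : O₂ = Matrix.diagonal ![-1, v])
    (W₂ : Matrix (Fin 2) (Fin 2) ℝ)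
    (hW₂ : W₂ = (2 / (N : ℝ)) •
        Matrix.of ![![(M : ℝ), (N : ℝ) - M], ![(M : ℝ), (N : ℝ) - M]] - 1)
    (ψ₂ : Fin 2 → ℝ) (hψ₂ : ψ₂ = fun _ => 1 / Real.sqrt N) :
    ∀ (K : ℕ) (i : Fin N),
      ((W * O) ^ K).mulVec ψ i =
        if (i : ℕ) < M then ((W₂ * O₂) ^ K).mulVec ψ₂ 0
        else ((W₂ * O₂) ^ K).mulVec ψ₂ 1 := by
  have hMN' : M ≤ N := le_of_lt hMN
  have hsum : ∀ a b : ℝ, (∑ j : Fin N, if (j : ℕ) < M then a else b)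
      = M * a + ((N : ℝ) - M) * b := by
    intro a b
    rw [Fin.sum_univ_eq_sum_range (fun n => if n < M then a else b) N]
    rw [Finset.range_eq_Ico, ← Finset.sum_Ico_consecutive _ (Nat.zero_le M) hMN']
    rw [Finset.sum_congr rfl (fun x hx => if_pos (Finset.mem_Ico.mp hx).2),
        Finset.sum_congr rfl (fun x hx => if_neg (not_lt.mpr (Finset.mem_Ico.mp hx).1))]
    simp [Nat.cast_sub hMN']
  have step : ∀ y : Fin 2 → ℝ,
      (W * O).mulVec (fun i => if (i : ℕ) < M then y 0 else y 1)
      = fun i : Fin N => if (i : ℕ) < M then (W₂ * O₂).mulVec y 0 else (W₂ * O₂).mulVec y 1 := by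
    intro y
    funext i
    subst hO hW hO₂ hW₂
    have lhs : (Matrix.of (fun i j => 2 / (N : ℝ) - if i = j then 1 else 0) *
        Matrix.diagonal (fun i : Fin N => if (i : ℕ) < M then -1 else v)).mulVec
        (fun i => if (i : ℕ) < M then y 0 else y 1) i
        = (2 / N) * (∑ j : Fin N, (if (j : ℕ) < M then (-1) * y 0 else v * y 1))
          - (if (i : ℕ) < M then (-1) * y 0 else v * y 1) := by
      simp only [Matrix.mulVec, dotProduct, Matrix.mul_diagonal, Matrix.of_apply]
      have : ∀ j : Fin N,
          (2 / (N : ℝ) - if i = j then 1 else 0) * (if (j : ℕ) < M then -1 else v) *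
            (if (j : ℕ) < M then y 0 else y 1)
          = (2 / N) * (if (j : ℕ) < M then (-1) * y 0 else v * y 1)
            - (if i = j then (if (j : ℕ) < M then (-1) * y 0 else v * y 1) else 0) := by
        intro j
        by_cases h : i = j <;> by_cases h2 : (j : ℕ) < M <;> simp [h, h2] <;> ring
      rw [Finset.sum_congr rfl (fun j _ => this j), Finset.sum_sub_distrib,
          ← Finset.mul_sum, Finset.sum_ite_eq]
      simp
    rw [lhs, hsum]
    simp only [Matrix.mulVec, dotProduct, Matrix.mul_apply, Fin.sum_univ_two,
      Matrix.sub_apply, Matrix.smul_apply, Matrix.of_apply, Matrix.one_apply,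
      Matrix.diagonal_apply, Matrix.cons_val_zero, Matrix.cons_val_one, Matrix.head_cons,
      Matrix.head_fin_const]
    by_cases h : (i : ℕ) < M <;> simp [h, Fin.ext_iff] <;> ring
  intro K
  induction K with
  | zero =>
    intro i
    simp [hψ, hψ₂]
  | succ K ih =>
    intro i
    have hfun : ((W * O) ^ K).mulVec ψ
        = fun i : Fin N => if (i : ℕ) < M then ((W₂ * O₂) ^ K).mulVec ψ₂ 0
          else ((W₂ * O₂) ^ K).mulVec ψ₂ 1 := funext ih
    rw [pow_succ', ← Matrix.mulVec_mulVec, hfun, step, pow_succ']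
    simp only [Matrix.mulVec_mulVec, Matrix.mul_assoc]
end
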